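/- Let L be a semiprime Hom-Lie algebra and L ⊆ Q an extension of Hom-Lie algebras such that Q is an algebra of quotients of L. Then for every essential Hom-ideal I of L, Q is an algebra of quotients of I. -/

import Mathlib

/-- A Hom-Lie algebra structure on a vector space `Q` over a field `𝔽`, with the
twisting map `α` additionally satisfying condition (2.1):
`α [x,y] = [α x, y] = [x, α y]`. -/
structure HomLieAlgebra (𝔽 : Type*) [Field 𝔽] (Q : Type*) [AddCommGroup Q] [Module 𝔽 Q] where
  bracket : Q →ₗ[𝔽] Q →ₗ[𝔽] Q
  alpha : Q →ₗ[𝔽] Q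
  skew : ∀ x y, bracket x y = - bracket y x
  jacobi : ∀ x y z, bracket (alpha x) (bracket y z) + bracket (alpha y) (bracket z x)
      + bracket (alpha z) (bracket x y) = 0
  comm₁ : ∀ x y, alpha (bracket x y) = bracket (alpha x) y
  comm₂ : ∀ x y, alpha (bracket x y) = bracket x (alpha y)

namespace HomLieAlgebra

variable {𝔽 : Type*} [Field 𝔽] {Q : Type*} [AddCommGroup Q] [Module 𝔽 Q]
variable (H : HomLieAlgebra 𝔽 Q)

/-- `S` is a Hom-subalgebra: a subspace closed under `α` and the bracket. -/
def IsSubalgebra (S : Submodule 𝔽 Q) : Prop :=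
  (∀ x ∈ S, H.alpha x ∈ S) ∧ ∀ x ∈ S, ∀ y ∈ S, H.bracket x y ∈ S

/-- `I` is a Hom-ideal of the Hom-subalgebra `L`:
a subspace `I ⊆ L` with `α(I) ⊆ I` and `[I, L] ⊆ I`. -/
def IsIdealOf (L I : Submodule 𝔽 Q) : Prop :=
  I ≤ L ∧ (∀ x ∈ I, H.alpha x ∈ I) ∧ ∀ x ∈ I, ∀ y ∈ L, H.bracket x y ∈ I

/-- The α-annihilator of the set `S` inside the subalgebra `M`:
`Ann_M(S) = {x ∈ M | [x, α(y)] = 0 for all y ∈ S}`. -/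
def annIn (M : Submodule 𝔽 Q) (S : Set Q) : Set Q :=
  {x | x ∈ M ∧ ∀ y ∈ S, H.bracket x (H.alpha y) = 0}

/-- `I` is an essential Hom-ideal of `L`: it hits every nonzero Hom-ideal of `L`. -/
def IsEssentialIdealOf (L I : Submodule 𝔽 Q) : Prop :=
  H.IsIdealOf L I ∧ ∀ J : Submodule 𝔽 Q, H.IsIdealOf L J → J ≠ ⊥ → I ⊓ J ≠ ⊥

/-- The Hom-Lie algebra `L` is semiprime: `[I, α(I)] ≠ {0}` for every nonzero
Hom-ideal `I` of `L`. -/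
def IsSemiprimeOn (L : Submodule 𝔽 Q) : Prop :=
  ∀ I : Submodule 𝔽 Q, H.IsIdealOf L I → I ≠ ⊥ →
    ∃ x ∈ I, ∃ y ∈ I, H.bracket x (H.alpha y) ≠ 0

/-- The Hom-Lie algebra `L` is prime: `[I, α(J)] ≠ {0}` for all nonzero
Hom-ideals `I`, `J` of `L`. -/
def IsPrimeOn (L : Submodule 𝔽 Q) : Prop :=
  ∀ I J : Submodule 𝔽 Q, H.IsIdealOf L I → I ≠ ⊥ → H.IsIdealOf L J → J ≠ ⊥ →
    ∃ x ∈ I, ∃ y ∈ J, H.bracket x (H.alpha y) ≠ 0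

/-- The iterated brackets `[[…[[q,x₁],x₂],…],xₙ]` with `xᵢ ∈ L` (including `q` itself). -/
inductive IsWord (L : Submodule 𝔽 Q) (q : Q) : Q → Prop
  | base : IsWord L q q
  | step {p : Q} (x : Q) : IsWord L q p → x ∈ L → IsWord L q (H.bracket p x)

/-- `_L(q)`: the linear span in `Q` of `q` together with all the iterated brackets
`[[…[[q,x₁],x₂],…],xₙ]` with `xᵢ ∈ L`. -/
def wordSpan (L : Submodule 𝔽 Q) (q : Q) : Submodule 𝔽 Q :=
  Submodule.span 𝔽 {p | H.IsWord L q p}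

/-- `(L : q) = {x ∈ L | [x, α(_L(q))] ⊆ L}`, as a subspace of `Q`. -/
def quotIdeal (L : Submodule 𝔽 Q) (q : Q) : Submodule 𝔽 Q where
  carrier := {x | x ∈ L ∧ ∀ p ∈ H.wordSpan L q, H.bracket x (H.alpha p) ∈ L}
  add_mem' := by
    rintro a b ⟨haL, ha⟩ ⟨hbL, hb⟩
    refine ⟨L.add_mem haL hbL, fun p hp => ?_⟩
    rw [map_add, LinearMap.add_apply]
    exact L.add_mem (ha p hp) (hb p hp)
  zero_mem' := ⟨L.zero_mem, fun p _ => by simp⟩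
  smul_mem' := by
    rintro c a ⟨haL, ha⟩
    refine ⟨L.smul_mem c haL, fun p hp => ?_⟩
    rw [map_smul, LinearMap.smul_apply]
    exact L.smul_mem c (ha p hp)

/-- `Q` is an algebra of quotients of its Hom-subalgebra `L`: for all `p, q ∈ Q` with
`p ≠ 0` there is `x ∈ (L : q)` with `[x, α(p)] ≠ 0`. -/
def IsAlgebraOfQuotients (L : Submodule 𝔽 Q) : Prop :=
  ∀ p q : Q, p ≠ 0 → ∃ x ∈ H.quotIdeal L q, H.bracket x (H.alpha p) ≠ 0

/-- `Q` is a weak algebra of quotients of its Hom-subalgebra `L`: for every nonzero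
`q ∈ Q` there is `x ∈ L` with `0 ≠ [x, α(q)] ∈ L`. -/
def IsWeakAlgebraOfQuotients (L : Submodule 𝔽 Q) : Prop :=
  ∀ q : Q, q ≠ 0 → ∃ x ∈ L, H.bracket x (H.alpha q) ≠ 0 ∧ H.bracket x (H.alpha q) ∈ L

/-- `Q` is ideally absorbed into `L`: for every nonzero `q ∈ Q` there is a Hom-ideal `I`
of `L` with `Ann_L(I) = {0}` and `{0} ≠ [I, α(q)] ⊆ L`. -/
def IsIdeallyAbsorbed (L : Submodule 𝔽 Q) : Prop :=
  ∀ q : Q, q ≠ 0 → ∃ I : Submodule 𝔽 Q, H.IsIdealOf L I ∧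
    H.annIn L (I : Set Q) = {0} ∧
    (∃ y ∈ I, H.bracket y (H.alpha q) ≠ 0) ∧
    ∀ y ∈ I, H.bracket y (H.alpha q) ∈ (L : Set Q)

/-- The inner derivation `ad_q : p ↦ [α(q), p]`. -/
def ad (q : Q) : Module.End 𝔽 Q := H.bracket (H.alpha q)

end HomLieAlgebra


/-!
Fix `p ≠ 0` and `q`. The set `P = {x ∈ I | [x, α(_L(q))] ⊆ I}` lies in `(I : q)` and, unlike
`(I : q)`, is a Hom-ideal of `L`. It is essential: `(L : q)` is essential because `Q` is an algebra
of quotients of `L`, so `K = I ∩ (L : q)` is essential, and for a nonzero Hom-ideal `J`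
semiprimeness gives `u, v ∈ K ∩ J` with `0 ≠ [u, α v] ∈ P ∩ J`. In a semiprime algebra an
essential Hom-ideal has zero annihilator. Now take `x₀ ∈ (L : p)` with `c = [x₀, α p] ≠ 0`;
then `c ∈ L`, and if `[P, α p] = 0` the Hom-Jacobi identity makes `c` annihilate `P`, so `c = 0`.
-/

namespace HomLieAlgebra

variable {𝔽 : Type*} [Field 𝔽] {Q : Type*} [AddCommGroup Q] [Module 𝔽 Q]
variable (H : HomLieAlgebra 𝔽 Q)

theorem bracket_alpha_left (x y : Q) : H.bracket (H.alpha x) y = H.bracket x (H.alpha y) :=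
  (H.comm₁ x y).symm.trans (H.comm₂ x y)

theorem bracket_bracket_alpha (x y w : Q) :
    H.bracket (H.bracket x y) (H.alpha w)
      = H.bracket x (H.bracket y (H.alpha w)) - H.bracket y (H.bracket x (H.alpha w)) := by
  have e1 : H.bracket (H.alpha x) (H.bracket y w) = H.bracket x (H.bracket y (H.alpha w)) := by
    rw [bracket_alpha_left, H.comm₂ y w]
  have e2 : H.bracket (H.alpha y) (H.bracket w x) = - H.bracket y (H.bracket x (H.alpha w)) := by
    rw [bracket_alpha_left, H.skew w x, map_neg, map_neg, H.comm₂ x w]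
  rw [H.skew (H.bracket x y) (H.alpha w), ← eq_neg_of_add_eq_zero_left (H.jacobi x y w), e1, e2,
    ← sub_eq_add_neg]

theorem bracket_alpha_right_eq_neg (a w : Q) :
    H.bracket a (H.alpha w) = - H.alpha (H.bracket w a) := by
  rw [H.skew a (H.alpha w), H.comm₁ w a]

variable {H}

theorem IsWord.mono {I L : Submodule 𝔽 Q} (hIL : I ≤ L) {q w : Q} (hw : H.IsWord I q w) :
    H.IsWord L q w := by
  induction hw with
  | base => exact .base
  | step x _ hx ih => exact .step x ih (hIL hx)

theorem self_mem_wordSpan (L : Submodule 𝔽 Q) (q : Q) : q ∈ H.wordSpan L q :=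
  Submodule.subset_span IsWord.base

theorem wordSpan_mono {I L : Submodule 𝔽 Q} (hIL : I ≤ L) (q : Q) :
    H.wordSpan I q ≤ H.wordSpan L q :=
  Submodule.span_mono fun _ hw => hw.mono hIL

theorem bracket_alpha_mem_of_forall_isWord {L S : Submodule 𝔽 Q} {q x : Q}
    (h : ∀ w, H.IsWord L q w → H.bracket x (H.alpha w) ∈ S) :
    ∀ r ∈ H.wordSpan L q, H.bracket x (H.alpha r) ∈ S :=
  fun _ hr => (Submodule.span_le (p := S.comap (H.bracket x ∘ₗ H.alpha))).mpr h hr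

theorem IsSubalgebra.isIdealOf_self {L : Submodule 𝔽 Q} (hL : H.IsSubalgebra L) :
    H.IsIdealOf L L :=
  ⟨le_rfl, hL⟩

theorem IsIdealOf.bracket_mem_left {L I : Submodule 𝔽 Q} (hI : H.IsIdealOf L I)
    {a x : Q} (ha : a ∈ L) (hx : x ∈ I) : H.bracket a x ∈ I := by
  rw [H.skew]
  exact I.neg_mem (hI.2.2 x hx a ha)

theorem IsIdealOf.inf {L I J : Submodule 𝔽 Q} (hI : H.IsIdealOf L I) (hJ : H.IsIdealOf L J) :
    H.IsIdealOf L (I ⊓ J) :=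
  ⟨inf_le_left.trans hI.1, fun x hx => ⟨hI.2.1 x hx.1, hJ.2.1 x hx.2⟩,
    fun x hx y hy => ⟨hI.2.2 x hx.1 y hy, hJ.2.2 x hx.2 y hy⟩⟩

theorem IsEssentialIdealOf.inf {L I J : Submodule 𝔽 Q} (hI : H.IsEssentialIdealOf L I)
    (hJ : H.IsEssentialIdealOf L J) : H.IsEssentialIdealOf L (I ⊓ J) := by
  refine ⟨hI.1.inf hJ.1, fun M hM hM0 => ?_⟩
  rw [inf_assoc]
  exact hI.2 _ (hJ.1.inf hM) (hJ.2 M hM hM0)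

variable (H)

/-- `(I :_L q)`: brackets land in `I` while the words still range over `L`. Unlike `(I : q)`,
this is a Hom-ideal of `L`, and `(L : q) = (L :_L q)`. -/
def colon (L I : Submodule 𝔽 Q) (q : Q) : Submodule 𝔽 Q where
  carrier := {x | x ∈ I ∧ ∀ r ∈ H.wordSpan L q, H.bracket x (H.alpha r) ∈ I}
  add_mem' := by
    rintro a b ⟨ha, ha'⟩ ⟨hb, hb'⟩
    refine ⟨I.add_mem ha hb, fun r hr => ?_⟩
    rw [map_add, LinearMap.add_apply]
    exact I.add_mem (ha' r hr) (hb' r hr)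
  zero_mem' := ⟨I.zero_mem, fun _ _ => by simp⟩
  smul_mem' := by
    rintro c a ⟨ha, ha'⟩
    refine ⟨I.smul_mem c ha, fun r hr => ?_⟩
    rw [map_smul, LinearMap.smul_apply]
    exact I.smul_mem c (ha' r hr)

variable {H}

theorem colon_le_quotIdeal {L I : Submodule 𝔽 Q} (hIL : I ≤ L) (q : Q) :
    H.colon L I q ≤ H.quotIdeal I q :=
  fun _ hx => ⟨hx.1, fun r hr => hx.2 r (wordSpan_mono hIL q hr)⟩

theorem IsIdealOf.isIdealOf_colon {L I : Submodule 𝔽 Q} (hI : H.IsIdealOf L I) (q : Q) :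
    H.IsIdealOf L (H.colon L I q) := by
  refine ⟨fun x hx => hI.1 hx.1, fun x hx => ⟨hI.2.1 x hx.1, fun r hr => ?_⟩,
    fun x hx a ha => ⟨hI.2.2 x hx.1 a ha, bracket_alpha_mem_of_forall_isWord fun w hw => ?_⟩⟩
  · rw [bracket_alpha_left, ← H.comm₂]
    exact hI.2.1 _ (hx.2 r hr)
  · have hxa : H.bracket x (H.bracket a (H.alpha w)) ∈ I := by
      rw [bracket_alpha_right_eq_neg, map_neg]
      exact I.neg_mem (hx.2 _ (Submodule.subset_span (hw.step a ha)))
    have hax : H.bracket a (H.bracket x (H.alpha w)) ∈ I :=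
      hI.bracket_mem_left ha (hx.2 w (Submodule.subset_span hw))
    rw [bracket_bracket_alpha]
    exact I.sub_mem hxa hax

theorem IsSubalgebra.isIdealOf_quotIdeal {L : Submodule 𝔽 Q} (hL : H.IsSubalgebra L) (q : Q) :
    H.IsIdealOf L (H.quotIdeal L q) :=
  hL.isIdealOf_self.isIdealOf_colon q

theorem IsAlgebraOfQuotients.isEssentialIdealOf_quotIdeal {L : Submodule 𝔽 Q}
    (hq : H.IsAlgebraOfQuotients L) (hL : H.IsSubalgebra L) (q : Q) :
    H.IsEssentialIdealOf L (H.quotIdeal L q) := by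
  refine ⟨hL.isIdealOf_quotIdeal q, fun J hJ hJ0 => ?_⟩
  obtain ⟨j, hj, hj0⟩ := (Submodule.ne_bot_iff J).mp hJ0
  obtain ⟨x, hx, hxj⟩ := hq j q hj0
  have key : H.bracket j (H.alpha x) = - H.bracket x (H.alpha j) := by
    rw [H.skew, bracket_alpha_left]
  refine (Submodule.ne_bot_iff _).mpr ⟨H.bracket j (H.alpha x), ⟨?_, ?_⟩, ?_⟩
  · rw [key]
    exact neg_mem ((hL.isIdealOf_quotIdeal q).2.2 x hx _ (hL.1 j (hJ.1 hj)))
  · exact hJ.2.2 j hj _ (hL.1 x hx.1)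
  · rwa [key, neg_ne_zero]

theorem bracket_mem_colon {L I : Submodule 𝔽 Q} (hI : H.IsIdealOf L I) {q x y : Q}
    (hx : x ∈ I ⊓ H.quotIdeal L q) (hy : y ∈ I ⊓ H.quotIdeal L q) :
    H.bracket x y ∈ H.colon L I q := by
  refine ⟨hI.2.2 x hx.1 y (hI.1 hy.1), bracket_alpha_mem_of_forall_isWord fun w hw => ?_⟩
  have hwL : w ∈ H.wordSpan L q := Submodule.subset_span hw
  rw [bracket_bracket_alpha]
  exact I.sub_mem (hI.2.2 x hx.1 _ (hy.2.2 w hwL)) (hI.2.2 y hy.1 _ (hx.2.2 w hwL))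

theorem IsSemiprimeOn.isEssentialIdealOf_colon {L I : Submodule 𝔽 Q}
    (hsp : H.IsSemiprimeOn L) (hL : H.IsSubalgebra L) (hq : H.IsAlgebraOfQuotients L)
    (hI : H.IsEssentialIdealOf L I) (q : Q) : H.IsEssentialIdealOf L (H.colon L I q) := by
  have hK := hI.inf (hq.isEssentialIdealOf_quotIdeal hL q)
  refine ⟨hI.1.isIdealOf_colon q, fun J hJ hJ0 => ?_⟩
  obtain ⟨u, hu, v, hv, huv⟩ := hsp _ (hK.1.inf hJ) (hK.2 J hJ hJ0)
  refine (Submodule.ne_bot_iff _).mpr ⟨H.bracket u (H.alpha v), ⟨?_, ?_⟩, huv⟩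
  · exact bracket_mem_colon hI.1 hu.1 (hK.1.2.1 v hv.1)
  · exact hJ.2.2 u hu.2 _ (hL.1 v (hJ.1 hv.2))

variable (H)

def annSubmodule (L N : Submodule 𝔽 Q) : Submodule 𝔽 Q where
  carrier := H.annIn L N
  add_mem' := by
    rintro a b ⟨ha, ha'⟩ ⟨hb, hb'⟩
    refine ⟨L.add_mem ha hb, fun n hn => ?_⟩
    rw [map_add, LinearMap.add_apply, ha' n hn, hb' n hn, add_zero]
  zero_mem' := ⟨L.zero_mem, fun _ _ => by simp⟩
  smul_mem' := by
    rintro c a ⟨ha, ha'⟩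
    refine ⟨L.smul_mem c ha, fun n hn => ?_⟩
    rw [map_smul, LinearMap.smul_apply, ha' n hn, smul_zero]

variable {H}

theorem IsIdealOf.isIdealOf_annSubmodule {L N : Submodule 𝔽 Q} (hN : H.IsIdealOf L N)
    (hL : H.IsSubalgebra L) : H.IsIdealOf L (H.annSubmodule L N) := by
  refine ⟨fun z hz => hz.1, fun z hz => ⟨hL.1 z hz.1, fun n hn => ?_⟩,
    fun z hz a ha => ⟨hL.2 z hz.1 a ha, fun n hn => ?_⟩⟩
  · rw [← H.comm₁, hz.2 n hn, map_zero]
  · rw [bracket_bracket_alpha, bracket_alpha_right_eq_neg, map_neg, hz.2 _ (hN.2.2 n hn a ha),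
      hz.2 n hn, neg_zero, map_zero, sub_zero]

theorem IsSemiprimeOn.eq_zero_of_mem_annIn {L N : Submodule 𝔽 Q} (hsp : H.IsSemiprimeOn L)
    (hL : H.IsSubalgebra L) (hN : H.IsEssentialIdealOf L N) {z : Q} (hz : z ∈ H.annIn L N) :
    z = 0 := by
  have hA := hN.1.isIdealOf_annSubmodule hL
  have hA0 : H.annSubmodule L N = ⊥ := by
    by_contra hA0
    obtain ⟨u, hu, v, hv, huv⟩ := hsp _ (hN.1.inf hA) (hN.2 _ hA hA0)
    exact huv (hu.2.2 v hv.1)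
  exact (Submodule.mem_bot 𝔽).mp (hA0 ▸ hz : z ∈ (⊥ : Submodule 𝔽 Q))

theorem bracket_alpha_mem_annIn {L P : Submodule 𝔽 Q} (hL : H.IsSubalgebra L)
    (hP : H.IsIdealOf L P) {p x : Q} (hx : x ∈ L) (hxp : H.bracket x (H.alpha p) ∈ L)
    (hPp : ∀ n ∈ P, H.bracket n (H.alpha p) = 0) :
    H.bracket x (H.alpha p) ∈ H.annIn L P := by
  refine ⟨hxp, fun n hn => ?_⟩
  have hpn : H.bracket (H.alpha p) (H.alpha n) = 0 := by
    rw [← H.comm₁, H.skew, bracket_alpha_left, hPp n hn, neg_zero, map_zero]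
  have hpxn : H.bracket (H.alpha p) (H.bracket x (H.alpha n)) = 0 := by
    rw [← bracket_alpha_left, H.skew (H.alpha x), map_neg, H.skew (H.alpha p),
      hPp _ (hP.2.2 n hn _ (hL.1 x hx)), neg_zero, neg_zero]
  rw [bracket_bracket_alpha, hpn, hpxn, map_zero, sub_zero]

end HomLieAlgebra

/-- If `L` is a semiprime Hom-Lie algebra and `Q` is an algebra of quotients of `L`,
then `Q` is an algebra of quotients of every essential Hom-ideal `I` of `L`. -/
theorem isAlgebraOfQuotients_of_essential_ideal
    {𝔽 Q : Type*} [Field 𝔽] [AddCommGroup Q] [Module 𝔽 Q]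
    (H : HomLieAlgebra 𝔽 Q) (L : Submodule 𝔽 Q) (hL : H.IsSubalgebra L)
    (hsp : H.IsSemiprimeOn L) (hq : H.IsAlgebraOfQuotients L) :
    ∀ I : Submodule 𝔽 Q, H.IsEssentialIdealOf L I → H.IsAlgebraOfQuotients I := by
  intro I hI p q hp
  by_contra! hIq
  have hP := hsp.isEssentialIdealOf_colon hL hq hI q
  obtain ⟨x, hx, hxp⟩ := hq p p hp
  have hxpL : H.bracket x (H.alpha p) ∈ L := hx.2 p (HomLieAlgebra.self_mem_wordSpan L p)
  have hPp : ∀ n ∈ H.colon L I q, H.bracket n (H.alpha p) = 0 :=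
    fun n hn => hIq n (HomLieAlgebra.colon_le_quotIdeal hI.1.1 q hn)
  exact hxp (hsp.eq_zero_of_mem_annIn hL hP
    (HomLieAlgebra.bracket_alpha_mem_annIn hL hP.1 hx.1 hxpL hPp))
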